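/- Let d ≥ 1, r > 0, let w be a weight, let v : ℤ^d → ℂ^d be divergence-free and real with ‖w v‖_{ℓ¹} < ∞, and let a : ℤ^d → ℂ satisfy Σ_k (1+|k|)|a(k)| < ∞. Then the instantaneous advective flux through the sphere of radius r obeys: 2 Re Σ_{|k|≥r} conj(a(k)) · ( −2πi Σ_{j∈ℤ^d} (k·v(k−j)) a(j) ) ≤ 4πr · ‖w v‖_{ℓ¹} · Σ_{k∈ℤ^d} w(||k|−r|)^{−1} |a(k)|². -/

import Mathlib

open MeasureTheory ENNReal Real Set
open scoped Classical

noncomputable section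

/-- Euclidean norm of a lattice point `k ∈ ℤ^d`. -/
def znorm {d : ℕ} (k : Fin d → ℤ) : ℝ := Real.sqrt (∑ i, ((k i : ℝ)) ^ 2)

/-- Euclidean norm of a vector in `ℂ^d`. -/
def cnorm {d : ℕ} (z : Fin d → ℂ) : ℝ := Real.sqrt (∑ i, ‖z i‖ ^ 2)

/-- Pairing `k · z = Σ_i k_i z_i`. -/
def zdot {d : ℕ} (k : Fin d → ℤ) (z : Fin d → ℂ) : ℂ := ∑ i, (k i : ℂ) * z i

/-- Divergence-free in Fourier variables: `k · v(k) = 0` for all `k`. -/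
def DivFree {d : ℕ} (v : (Fin d → ℤ) → Fin d → ℂ) : Prop := ∀ k, zdot k (v k) = 0

/-- Fourier coefficients of a real vector field: `v(-k) = conj (v k)`. -/
def RealCoeff {d : ℕ} (v : (Fin d → ℤ) → Fin d → ℂ) : Prop :=
  ∀ k i, v (-k) i = starRingEnd ℂ (v k i)

/-- A weight: nondecreasing on `[0,∞)` with values in `[1,∞]`. -/
def IsWeight (w : ℝ → ℝ≥0∞) : Prop :=
  MonotoneOn w (Set.Ici 0) ∧ ∀ s, 0 ≤ s → 1 ≤ w s

/-- Weighted ℓ¹ norm `‖w v‖_{ℓ¹} = Σ_k w(|k|)|v(k)|`. -/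
def wl1 {d : ℕ} (w : ℝ → ℝ≥0∞) (v : (Fin d → ℤ) → Fin d → ℂ) : ℝ≥0∞ :=
  ∑' k, w (znorm k) * ENNReal.ofReal (cnorm (v k))

/-- `(w⁻¹ * m_a)(r) = Σ_k w(||k|-r|)⁻¹ |a(k)|²`. -/
def convMass {d : ℕ} (w : ℝ → ℝ≥0∞) (a : (Fin d → ℤ) → ℂ) (r : ℝ) : ℝ≥0∞ :=
  ∑' k, (w |znorm k - r|)⁻¹ * (‖a k‖₊ : ℝ≥0∞) ^ 2

/-- `m_a(E) = Σ_{|k| ∈ E} |a(k)|²`. -/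
def massOn {d : ℕ} (a : (Fin d → ℤ) → ℂ) (E : Set ℝ) : ℝ≥0∞ :=
  ∑' k, if znorm k ∈ E then (‖a k‖₊ : ℝ≥0∞) ^ 2 else 0

/-- Logarithmic density measure `μ_{a,b}(E)`. -/
def logDensity (a b : ℝ) (E : Set ℝ) : ℝ≥0∞ :=
  (ENNReal.ofReal (Real.log (b / a)))⁻¹ * ∫⁻ r in E ∩ Set.Icc a b, ENNReal.ofReal r⁻¹

/-- The right-hand side of the Fourier advection–diffusion system. -/
def fourierRHS {d : ℕ} (ν : ℝ) (v : (Fin d → ℤ) → Fin d → ℂ) (a : (Fin d → ℤ) → ℂ)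
    (k : Fin d → ℤ) : ℂ :=
  Complex.ofReal (-(4 * π ^ 2 * ν * znorm k ^ 2)) * a k
    - 2 * Complex.ofReal π * Complex.I * ∑' j, zdot k (v (k - j)) * a j

/-!
With `c = -2πi` the flux is `c · Σ_{|k| ≥ r} Σ_j K(k, j)` for the kernel
`K(k, j) = conj (a k) (k · v(k - j)) a j`. As `v` is real and divergence-free, `K` is Hermitian:
`conj K(k, j) = K(j, k)`. Hence the pairs with `|k|, |j| ≥ r` add up to a real number, which `c`
turns purely imaginary, and only the pairs with `|j| < r ≤ |k|` contribute to the real part. For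
those, `k · v(k - j) = j · v(k - j)` has size at most `r |v(k - j)|`, while both `||k| - r|` and
`||j| - r|` are at most `|k - j|`; monotonicity of `w` and AM-GM bound `|K(k, j)|` by
`r w(|k - j|) |v(k - j)| (w(||k| - r|)⁻¹ |a k|² + w(||j| - r|)⁻¹ |a j|²) / 2`, and summing this
convolution gives `r ‖w v‖_{ℓ¹} (w⁻¹ * m_a)(r)`.
-/

open scoped NNReal

lemma IsWeight.ne_zero {w : ℝ → ℝ≥0∞} (hw : IsWeight w) {s : ℝ} (hs : 0 ≤ s) : w s ≠ 0 :=
  (zero_lt_one.trans_le (hw.2 s hs)).ne'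

lemma IsWeight.mono {w : ℝ → ℝ≥0∞} (hw : IsWeight w) {s t : ℝ} (hs : 0 ≤ s) (hst : s ≤ t) :
    w s ≤ w t :=
  hw.1 hs (hs.trans hst) hst

section Lattice

variable {d : ℕ}

lemma znorm_nonneg (k : Fin d → ℤ) : 0 ≤ znorm k := Real.sqrt_nonneg _

lemma cnorm_nonneg (z : Fin d → ℂ) : 0 ≤ cnorm z := Real.sqrt_nonneg _

lemma norm_zdot_le (k : Fin d → ℤ) (z : Fin d → ℂ) : ‖zdot k z‖ ≤ znorm k * cnorm z := by
  calc ‖zdot k z‖ ≤ ∑ i, |(k i : ℝ)| * ‖z i‖ := by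
        refine (norm_sum_le _ _).trans_eq (Finset.sum_congr rfl fun i _ => ?_)
        rw [norm_mul, ← Complex.ofReal_intCast, Complex.norm_real, Real.norm_eq_abs]
    _ ≤ √(∑ i, |(k i : ℝ)| ^ 2) * √(∑ i, ‖z i‖ ^ 2) := Real.sum_mul_le_sqrt_mul_sqrt _ _ _
    _ = znorm k * cnorm z := by simp only [sq_abs, znorm, cnorm]

lemma znorm_eq_norm (k : Fin d → ℤ) :
    znorm k = ‖(EuclideanSpace.equiv (Fin d) ℝ).symm (fun i => (k i : ℝ))‖ := by
  simp [EuclideanSpace.norm_eq, znorm, Real.norm_eq_abs, sq_abs]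

lemma znorm_sub_znorm_le (k j : Fin d → ℤ) : znorm k - znorm j ≤ znorm (k - j) := by
  simp only [znorm_eq_norm]
  refine (norm_sub_norm_le _ _).trans_eq ?_
  rw [← map_sub]
  congr 2
  ext i
  simp

lemma zdot_add_left (k j : Fin d → ℤ) (z : Fin d → ℂ) :
    zdot (k + j) z = zdot k z + zdot j z := by
  simp only [zdot, Pi.add_apply, Int.cast_add, add_mul, Finset.sum_add_distrib]

lemma conj_zdot (k : Fin d → ℤ) (z : Fin d → ℂ) :
    starRingEnd ℂ (zdot k z) = zdot k (fun i => starRingEnd ℂ (z i)) := by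
  simp [zdot]

lemma DivFree.zdot_sub_eq {v : (Fin d → ℤ) → Fin d → ℂ} (hdiv : DivFree v) (k j : Fin d → ℤ) :
    zdot k (v (k - j)) = zdot j (v (k - j)) := by
  rw [← sub_add_cancel k j, zdot_add_left, add_sub_cancel_right, hdiv, zero_add]

lemma summable_cnorm_of_wl1_ne_top {w : ℝ → ℝ≥0∞} (hw : IsWeight w)
    {v : (Fin d → ℤ) → Fin d → ℂ} (hv : wl1 w v ≠ ⊤) : Summable fun k => cnorm (v k) := by
  have hle : ∑' k, ENNReal.ofReal (cnorm (v k)) ≤ wl1 w v :=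
    ENNReal.tsum_le_tsum fun k => le_mul_of_one_le_left' (hw.2 _ (znorm_nonneg k))
  exact (ENNReal.summable_toReal (ne_top_of_le_ne_top hv hle)).congr
    fun k => ENNReal.toReal_ofReal (cnorm_nonneg _)

def weightedVelocity (w : ℝ → ℝ≥0∞) (v : (Fin d → ℤ) → Fin d → ℂ) (m : Fin d → ℤ) : ℝ≥0∞ :=
  w (znorm m) * ENNReal.ofReal (cnorm (v m))

def weightedMass (w : ℝ → ℝ≥0∞) (a : (Fin d → ℤ) → ℂ) (r : ℝ) (k : Fin d → ℤ) : ℝ≥0∞ :=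
  (w |znorm k - r|)⁻¹ * (‖a k‖₊ : ℝ≥0∞) ^ 2

lemma tsum_weightedVelocity (w : ℝ → ℝ≥0∞) (v : (Fin d → ℤ) → Fin d → ℂ) :
    ∑' m, weightedVelocity w v m = wl1 w v := rfl

lemma tsum_weightedMass (w : ℝ → ℝ≥0∞) (a : (Fin d → ℤ) → ℂ) (r : ℝ) :
    ∑' k, weightedMass w a r k = convMass w a r := rfl

end Lattice

section Convolution

variable {G : Type*} [AddCommGroup G]

lemma summable_mul_sub_mul {f h u : G → ℝ} (hf : Summable f) (hh : Summable h) (hu : Summable u)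
    (hf0 : ∀ k, 0 ≤ f k) (hh0 : ∀ m, 0 ≤ h m) (hu0 : ∀ j, 0 ≤ u j) :
    Summable fun p : G × G => f p.1 * (h (p.1 - p.2) * u p.2) := by
  set C := ∑' j, u j
  have hshear : Summable fun p : G × G => f p.1 * (h (p.1 - p.2) * C) := by
    refine ((Equiv.refl G).prodShear Equiv.subLeft).summable_iff.mp ?_
    simpa [Function.comp_def] using hf.mul_of_nonneg (hh.mul_right C) hf0
      fun m => mul_nonneg (hh0 m) (tsum_nonneg hu0)
  refine hshear.of_nonneg_of_le (fun p => mul_nonneg (hf0 _) (mul_nonneg (hh0 _) (hu0 _)))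
    fun p => ?_
  gcongr
  · exact hf0 _
  · exact hh0 _
  · exact hu.le_tsum _ fun j _ => hu0 j

lemma ENNReal.tsum_prod_sub_mul_fst (W M : G → ℝ≥0∞) :
    ∑' p : G × G, W (p.1 - p.2) * M p.1 = (∑' m, W m) * ∑' k, M k := by
  rw [ENNReal.tsum_prod', ← ENNReal.tsum_mul_left]
  dsimp only
  refine tsum_congr fun k => ?_
  rw [ENNReal.tsum_mul_right, ← (Equiv.subLeft k).tsum_eq W]
  rfl

lemma ENNReal.tsum_prod_sub_mul_snd (W M : G → ℝ≥0∞) :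
    ∑' p : G × G, W (p.1 - p.2) * M p.2 = (∑' m, W m) * ∑' j, M j := by
  rw [ENNReal.tsum_prod', ENNReal.tsum_comm, ← ENNReal.tsum_mul_left]
  dsimp only
  refine tsum_congr fun j => ?_
  rw [ENNReal.tsum_mul_right, ← (Equiv.subRight j).tsum_eq W]
  rfl

lemma ENNReal.tsum_prod_sub_mul_half_add (W M : G → ℝ≥0∞) :
    ∑' p : G × G, W (p.1 - p.2) * (2⁻¹ * (M p.1 + M p.2)) = (∑' m, W m) * ∑' k, M k := by
  calc ∑' p : G × G, W (p.1 - p.2) * (2⁻¹ * (M p.1 + M p.2))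
      = 2⁻¹ * (∑' p : G × G, W (p.1 - p.2) * M p.1 + ∑' p : G × G, W (p.1 - p.2) * M p.2) := by
        rw [← ENNReal.tsum_add, ← ENNReal.tsum_mul_left]
        exact tsum_congr fun p => by ring
    _ = (∑' m, W m) * ∑' k, M k := by
        rw [ENNReal.tsum_prod_sub_mul_fst, ENNReal.tsum_prod_sub_mul_snd, ← two_mul, ← mul_assoc,
          ENNReal.inv_mul_cancel two_ne_zero ENNReal.ofNat_ne_top, one_mul]

end Convolution

lemma ENNReal.mul_le_mul_half_inv_add {x y : ℝ≥0} {u u' W : ℝ≥0∞} (hu : u ≠ 0) (hu' : u' ≠ 0)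
    (huW : u ≤ W) (hu'W : u' ≤ W) (hW : W ≠ ⊤) :
    x * y ≤ W * (2⁻¹ * (u⁻¹ * x ^ 2 + u'⁻¹ * y ^ 2)) := by
  have hx : (x : ℝ≥0∞) ^ 2 ≤ W * (u⁻¹ * x ^ 2) := by
    calc (x : ℝ≥0∞) ^ 2 = u * u⁻¹ * x ^ 2 := by
          rw [ENNReal.mul_inv_cancel hu (ne_top_of_le_ne_top hW huW), one_mul]
      _ ≤ W * (u⁻¹ * x ^ 2) := by rw [mul_assoc]; gcongr
  have hy : (y : ℝ≥0∞) ^ 2 ≤ W * (u'⁻¹ * y ^ 2) := by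
    calc (y : ℝ≥0∞) ^ 2 = u' * u'⁻¹ * y ^ 2 := by
          rw [ENNReal.mul_inv_cancel hu' (ne_top_of_le_ne_top hW hu'W), one_mul]
      _ ≤ W * (u'⁻¹ * y ^ 2) := by rw [mul_assoc]; gcongr
  have hamgm : ((2 * x * y : ℝ≥0) : ℝ≥0∞) ≤ ((x ^ 2 + y ^ 2 : ℝ≥0) : ℝ≥0∞) :=
    ENNReal.coe_le_coe.mpr (two_mul_le_add_sq x y)
  push_cast at hamgm
  calc (x * y : ℝ≥0∞) = 2⁻¹ * (2 * x * y) := by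
        rw [mul_assoc, ← mul_assoc, ENNReal.inv_mul_cancel two_ne_zero ENNReal.ofNat_ne_top,
          one_mul]
    _ ≤ 2⁻¹ * (x ^ 2 + y ^ 2) := by gcongr
    _ ≤ 2⁻¹ * (W * (u⁻¹ * x ^ 2) + W * (u'⁻¹ * y ^ 2)) := by gcongr
    _ = W * (2⁻¹ * (u⁻¹ * x ^ 2 + u'⁻¹ * y ^ 2)) := by ring

lemma Complex.im_tsum_eq_zero_of_conj_swap {ι : Type*} {f : ι × ι → ℂ}
    (hf : ∀ p, starRingEnd ℂ (f p) = f p.swap) : (∑' p, f p).im = 0 := by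
  refine Complex.conj_eq_iff_im.mp ?_
  rw [Complex.conj_tsum, tsum_congr hf]
  exact (Equiv.prodComm ι ι).tsum_eq f

lemma Complex.ofReal_im_tsum_ite_le {ι : Type*} (P : ι → Prop) [DecidablePred P] {K : ι × ι → ℂ}
    (hK : ∀ p, starRingEnd ℂ (K p) = K p.swap) (hKs : Summable fun p => ‖K p‖)
    {B : ι × ι → ℝ≥0∞} (hB : ∀ p, P p.1 → ¬P p.2 → ‖K p‖ₑ ≤ B p) :
    ENNReal.ofReal (∑' p, if P p.1 then K p else 0).im ≤ ∑' p, B p := by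
  set both : ι × ι → ℂ := fun p => if P p.1 ∧ P p.2 then K p else 0
  set crossing : ι × ι → ℂ := fun p => if P p.1 ∧ ¬P p.2 then K p else 0
  have hsplit : ∀ p, (if P p.1 then K p else 0) = both p + crossing p := by
    intro p
    by_cases h1 : P p.1 <;> by_cases h2 : P p.2 <;> simp [both, crossing, h1, h2]
  have hboth_summable : Summable both :=
    .of_norm_bounded hKs fun p => by simp only [both]; split_ifs <;> simp
  have hcrossing_summable : Summable crossing :=
    .of_norm_bounded hKs fun p => by simp only [crossing]; split_ifs <;> simp
  have hboth_im : (∑' p, both p).im = 0 := by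
    refine Complex.im_tsum_eq_zero_of_conj_swap fun p => ?_
    by_cases h : P p.1 ∧ P p.2
    · simp [both, h, hK]
    · simp [both, h, and_comm]
  rw [tsum_congr hsplit, hboth_summable.tsum_add hcrossing_summable, Complex.add_im, hboth_im,
    zero_add]
  calc ENNReal.ofReal (∑' p, crossing p).im ≤ ‖∑' p, crossing p‖ₑ := by
        rw [← ofReal_norm]
        exact ENNReal.ofReal_le_ofReal (Complex.im_le_norm _)
    _ ≤ ∑' p, B p := tsum_of_enorm_bounded ENNReal.summable.hasSum fun p => by
        by_cases h : P p.1 ∧ ¬P p.2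
        · simpa [crossing, h] using hB p h.1 h.2
        · simp [crossing, h]

section FluxKernel

variable {d : ℕ}

def fluxKernel (v : (Fin d → ℤ) → Fin d → ℂ) (a : (Fin d → ℤ) → ℂ) (k j : Fin d → ℤ) : ℂ :=
  starRingEnd ℂ (a k) * (zdot k (v (k - j)) * a j)

variable {v : (Fin d → ℤ) → Fin d → ℂ} {a : (Fin d → ℤ) → ℂ}

lemma fluxKernel_conj (hdiv : DivFree v) (hreal : RealCoeff v) (k j : Fin d → ℤ) :
    starRingEnd ℂ (fluxKernel v a k j) = fluxKernel v a j k := by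
  have hconj : (fun i => starRingEnd ℂ (v (k - j) i)) = v (j - k) := by
    funext i
    rw [← neg_sub, hreal, Complex.conj_conj]
  simp only [fluxKernel, map_mul, Complex.conj_conj, conj_zdot, hconj, hdiv.zdot_sub_eq j k]
  ring

lemma norm_fluxKernel_le (k j : Fin d → ℤ) :
    ‖fluxKernel v a k j‖ ≤ znorm k * ‖a k‖ * (cnorm (v (k - j)) * ‖a j‖) := by
  rw [fluxKernel, norm_mul, norm_mul, Complex.norm_conj]
  calc ‖a k‖ * (‖zdot k (v (k - j))‖ * ‖a j‖)
      ≤ ‖a k‖ * (znorm k * cnorm (v (k - j)) * ‖a j‖) := by gcongr; exact norm_zdot_le _ _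
    _ = znorm k * ‖a k‖ * (cnorm (v (k - j)) * ‖a j‖) := by ring

lemma summable_norm_fluxKernel {w : ℝ → ℝ≥0∞} (hw : IsWeight w) (hv : wl1 w v ≠ ⊤)
    (ha : Summable fun k => (1 + znorm k) * ‖a k‖) :
    Summable fun p : (Fin d → ℤ) × (Fin d → ℤ) => ‖fluxKernel v a p.1 p.2‖ := by
  have hza : Summable fun k => znorm k * ‖a k‖ :=
    ha.of_nonneg_of_le (fun k => mul_nonneg (znorm_nonneg k) (norm_nonneg _))
      fun k => by gcongr; linarith
  have hna : Summable fun k => ‖a k‖ :=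
    ha.of_nonneg_of_le (fun k => norm_nonneg _)
      fun k => le_mul_of_one_le_left (norm_nonneg _) (by linarith [znorm_nonneg k])
  refine (summable_mul_sub_mul hza (summable_cnorm_of_wl1_ne_top hw hv) hna
    (fun k => mul_nonneg (znorm_nonneg k) (norm_nonneg _)) (fun m => cnorm_nonneg _)
    (fun j => norm_nonneg _)).of_nonneg_of_le (fun p => norm_nonneg _)
    fun p => norm_fluxKernel_le p.1 p.2

lemma enorm_fluxKernel_le {w : ℝ → ℝ≥0∞} (hw : IsWeight w) (hv : wl1 w v ≠ ⊤)
    (hdiv : DivFree v) {r : ℝ} {k j : Fin d → ℤ} (hk : r ≤ znorm k) (hj : znorm j < r) :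
    ‖fluxKernel v a k j‖ₑ ≤ ENNReal.ofReal r *
      (weightedVelocity w v (k - j) * (2⁻¹ * (weightedMass w a r k + weightedMass w a r j))) := by
  set V := ENNReal.ofReal (cnorm (v (k - j)))
  have hzdot : ‖zdot k (v (k - j))‖ₑ ≤ ENNReal.ofReal r * V := by
    rw [← ofReal_norm, ← ENNReal.ofReal_mul (by linarith [znorm_nonneg j]), hdiv.zdot_sub_eq]
    refine ENNReal.ofReal_le_ofReal ((norm_zdot_le _ _).trans ?_)
    gcongr
    exact cnorm_nonneg _
  have hkernel : ‖fluxKernel v a k j‖ₑ ≤ ENNReal.ofReal r * (V * (‖a k‖₊ * ‖a j‖₊)) := by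
    rw [fluxKernel, enorm_mul, enorm_mul, RCLike.enorm_conj]
    calc ‖a k‖ₑ * (‖zdot k (v (k - j))‖ₑ * ‖a j‖ₑ) ≤ ‖a k‖ₑ * (ENNReal.ofReal r * V * ‖a j‖ₑ) := by
          gcongr
      _ = ENNReal.ofReal r * (V * (‖a k‖₊ * ‖a j‖₊)) := by simp only [enorm_eq_nnnorm]; ring
  refine hkernel.trans ?_
  rw [weightedVelocity, mul_assoc (w _), mul_left_comm (w _)]
  -- `w` can be infinite at `k - j` only where `v (k - j)` vanishes.
  by_cases hV : V = 0
  · simp [hV]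
  gcongr ENNReal.ofReal r * (V * ?_)
  have hw_ne_top : w (znorm (k - j)) ≠ ⊤ := fun htop =>
    ENNReal.ne_top_of_tsum_ne_top hv (k - j) (by simp [htop, hV, V])
  have hkj := znorm_sub_znorm_le k j
  have hj0 := znorm_nonneg j
  exact ENNReal.mul_le_mul_half_inv_add (hw.ne_zero (abs_nonneg _)) (hw.ne_zero (abs_nonneg _))
    (hw.mono (abs_nonneg _) (abs_le.mpr ⟨by linarith, by linarith⟩))
    (hw.mono (abs_nonneg _) (abs_le.mpr ⟨by linarith, by linarith⟩)) hw_ne_top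

lemma tsum_ite_conj_mul_eq_tsum_fluxKernel
    (hK : Summable fun p : (Fin d → ℤ) × (Fin d → ℤ) => ‖fluxKernel v a p.1 p.2‖)
    (P : (Fin d → ℤ) → Prop) [DecidablePred P] (c : ℂ) :
    ∑' k, (if P k then starRingEnd ℂ (a k) * (c * ∑' j, zdot k (v (k - j)) * a j) else 0)
      = c * ∑' p : (Fin d → ℤ) × (Fin d → ℤ), if P p.1 then fluxKernel v a p.1 p.2 else 0 := by
  have hs : Summable fun p : (Fin d → ℤ) × (Fin d → ℤ) =>
      if P p.1 then fluxKernel v a p.1 p.2 else 0 :=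
    .of_norm_bounded hK fun p => by split_ifs <;> simp
  rw [hs.tsum_prod, ← tsum_mul_left]
  refine tsum_congr fun k => ?_
  split_ifs
  · simp only [fluxKernel, ← tsum_mul_left]
    exact tsum_congr fun j => by ring
  · simp

end FluxKernel

theorem instantaneous_flux_bound_general {d : ℕ} (r : ℝ)
    (w : ℝ → ℝ≥0∞) (hw : IsWeight w)
    (v : (Fin d → ℤ) → Fin d → ℂ) (hdiv : DivFree v) (hreal : RealCoeff v)
    (hv : wl1 w v ≠ ⊤)
    (a : (Fin d → ℤ) → ℂ) (ha : Summable fun k => (1 + znorm k) * ‖a k‖) :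
    ENNReal.ofReal (2 * Complex.re (∑' k : Fin d → ℤ,
        if r ≤ znorm k then
          starRingEnd ℂ (a k) *
            (-(2 * Complex.ofReal π * Complex.I) * ∑' j : Fin d → ℤ, zdot k (v (k - j)) * a j)
        else 0))
      ≤ ENNReal.ofReal (4 * π * r) * wl1 w v * convMass w a r := by
  have hK := summable_norm_fluxKernel hw hv ha
  have hre (z : ℂ) : 2 * (-(2 * Complex.ofReal π * Complex.I) * z).re = 4 * π * z.im := by
    simp only [neg_mul, Complex.neg_re, Complex.mul_re, Complex.re_ofNat, Complex.ofReal_re,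
      Complex.im_ofNat, Complex.ofReal_im, mul_zero, sub_zero, Complex.I_re, Complex.mul_im,
      zero_mul, add_zero, Complex.I_im, mul_one, sub_self, zero_sub, neg_neg]
    ring
  have hLHS := tsum_ite_conj_mul_eq_tsum_fluxKernel hK (fun k => r ≤ znorm k)
    (-(2 * Complex.ofReal π * Complex.I))
  rw [hLHS, hre, ENNReal.ofReal_mul (by positivity : (0 : ℝ) ≤ 4 * π)]
  calc _ ≤ ENNReal.ofReal (4 * π) * ∑' p : (Fin d → ℤ) × (Fin d → ℤ), ENNReal.ofReal r *
          (weightedVelocity w v (p.1 - p.2) *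
            (2⁻¹ * (weightedMass w a r p.1 + weightedMass w a r p.2))) := by
        gcongr
        exact Complex.ofReal_im_tsum_ite_le (fun k => r ≤ znorm k)
          (fun p => fluxKernel_conj hdiv hreal p.1 p.2) hK
          fun p hk hj => enorm_fluxKernel_le hw hv hdiv hk (not_le.mp hj)
    _ = ENNReal.ofReal (4 * π * r) * wl1 w v * convMass w a r := by
        rw [ENNReal.tsum_mul_left, ENNReal.tsum_prod_sub_mul_half_add, tsum_weightedVelocity,
          tsum_weightedMass, ENNReal.ofReal_mul (by positivity : (0 : ℝ) ≤ 4 * π)]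
        ring

/-- the instantaneous advective flux through the sphere of radius `r` is
bounded by the weighted ℓ¹ norm of the velocity times the convolved mass. -/
theorem instantaneous_flux_bound {d : ℕ} (hd : 1 ≤ d) (r : ℝ) (hr : 0 < r)
    (w : ℝ → ℝ≥0∞) (hw : IsWeight w)
    (v : (Fin d → ℤ) → Fin d → ℂ) (hdiv : DivFree v) (hreal : RealCoeff v)
    (hv : wl1 w v ≠ ⊤)
    (a : (Fin d → ℤ) → ℂ) (ha : Summable fun k => (1 + znorm k) * ‖a k‖) :
    ENNReal.ofReal (2 * Complex.re (∑' k : Fin d → ℤ,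
        if r ≤ znorm k then
          starRingEnd ℂ (a k) *
            (-(2 * Complex.ofReal π * Complex.I) * ∑' j : Fin d → ℤ, zdot k (v (k - j)) * a j)
        else 0))
      ≤ ENNReal.ofReal (4 * π * r) * wl1 w v * convMass w a r :=
  instantaneous_flux_bound_general r w hw v hdiv hreal hv a ha
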